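/- arXiv:1011.4154 — 2 statements merged into one kernel-verified Lean document; each statement's English description precedes it below -/
import Mathlib

section
/- With notation as in the context, PV = V and VP = V in M_h(A). -/
/-- The range map extended to `E¹ ⊕ E⁰` via the convention `r v = v` for vertices. -/
def rext {V E : Type*} (r : E → V) : E ⊕ V → V := Sum.elim r id

/-- The index set `S↑(x)`. -/
def SUp {V E : Type*} (s : E → V) (x : V → ℤ) : Set ((E ⊕ V) × ℤ) :=
  {q | match q.1 with
       | Sum.inl e => 1 ≤ q.2 ∧ q.2 ≤ -x (s e)
       | Sum.inr v => 1 ≤ q.2 ∧ q.2 ≤ x v}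

/-- The index set `S↓(x)`. -/
def SDn {V E : Type*} (s : E → V) (x : V → ℤ) : Set ((E ⊕ V) × ℤ) :=
  {q | match q.1 with
       | Sum.inl e => 1 ≤ q.2 ∧ q.2 ≤ x (s e)
       | Sum.inr v => 1 ≤ q.2 ∧ q.2 ≤ -x v}

/-- The element `V` of `M_h(A)` associated to a family `{p_v, s_e}` and `x`:
`V = ∑_{w, 1≤i≤x_w, s(e)=w} s_e·E_{m↑(w,i),m↓(e,i)} + ∑_{w, 1≤i≤-x_w, s(e)=w} s_e*·E_{m↑(e,i),m↓(w,i)}`,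
where the first sum is indexed by the pairs `(e,i) ∈ S↓(x)` with `e ∈ E¹` (and `w = s(e)`),
and the second by the pairs `(e,i) ∈ S↑(x)` with `e ∈ E¹` (and `w = s(e)`). -/
noncomputable def Vmat {V E A : Type*} [AddCommMonoid A] [Star A]
    (s : E → V) (x : V → ℤ) (S : E → A) {h : ℕ}
    [Fintype (SUp s x)] [Fintype (SDn s x)]
    (mup : SUp s x ≃ Fin h) (mdn : SDn s x ≃ Fin h) : Matrix (Fin h) (Fin h) A :=
  (∑ q : SDn s x, match q with
    | ⟨(Sum.inl e, i), hq⟩ =>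
        Matrix.single (mup ⟨(Sum.inr (s e), i), hq⟩) (mdn ⟨(Sum.inl e, i), hq⟩) (S e)
    | ⟨(Sum.inr _, _), _⟩ => 0)
  + (∑ q : SUp s x, match q with
    | ⟨(Sum.inl e, i), hq⟩ =>
        Matrix.single (mup ⟨(Sum.inl e, i), hq⟩) (mdn ⟨(Sum.inr (s e), i), hq⟩) (star (S e))
    | ⟨(Sum.inr _, _), _⟩ => 0)

/-- The element `P` of `M_h(A)`:
`P = ∑_{w, 1≤i≤x_w} p_w·E_{m↑(w,i),m↑(w,i)} + ∑_{w, 1≤i≤-x_w, s(e)=w} p_{r(e)}·E_{m↑(e,i),m↑(e,i)}`,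
written as a single sum over `S↑(x)` using the convention `r v = v`. -/
noncomputable def Pmat {V E A : Type*} [AddCommMonoid A]
    (r s : E → V) (x : V → ℤ) (p : V → A) {h : ℕ}
    [Fintype (SUp s x)]
    (mup : SUp s x ≃ Fin h) : Matrix (Fin h) (Fin h) A :=
  ∑ q : SUp s x, Matrix.single (mup q) (mup q) (p (rext r q.1.1))


/-!
`P` is the diagonal matrix carrying `p_{r(y)}` at position `m↑(y,i)`, and the
compatibility of `m↑` and `m↓` says that the column `m↓(z,j)` of `V` also meets the diagonal entry
`p_{r(z)}`. Every nonzero entry of `V` is either `s_e` (in row `s(e)`, column `r(e)`) or `s_e*`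
(in row `r(e)`, column `s(e)`), so `PV = V = VP` reduces to `p_{s(e)} s_e = s_e`,
`s_e p_{r(e)} = s_e` and their adjoints. The second holds because `s_e* s_e = p_{r(e)}` is a
projection, which by the C*-identity makes `s_e` a partial isometry.
-/

open Matrix

theorem mul_star_mul_self_of_isIdempotentElem {A : Type*} [NonUnitalCStarAlgebra A] {a : A}
    (h : IsIdempotentElem (star a * a)) : a * (star a * a) = a := by
  have hz : star (a * (star a * a) - a) * (a * (star a * a) - a) = 0 := by
    have expand : star (a * (star a * a) - a) * (a * (star a * a) - a)
        = (star a * a) * (star a * a) * (star a * a)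
          - (star a * a) * (star a * a) - (star a * a) * (star a * a) + star a * a := by
      simp only [star_sub, star_mul, star_star]
      noncomm_ring
    rw [expand, h.eq, h.eq]
    abel
  exact sub_eq_zero.mp ((CStarRing.star_mul_self_eq_zero_iff _).mp hz)

namespace Matrix

variable {α n : Type*} [DecidableEq n]

theorem sum_single_equiv_eq_diagonal {ι : Type*} [AddCommMonoid α] [Fintype ι]
    (f : ι ≃ n) (g : ι → α) :
    ∑ q, single (f q) (f q) (g q) = diagonal (g ∘ f.symm) := by
  ext i j
  rw [sum_apply, Fintype.sum_eq_single (f.symm i)]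
  · by_cases hij : i = j <;> simp [hij]
  · intro q hq
    simp [single_apply, Equiv.eq_symm_apply] at hq ⊢
    grind

variable [Fintype n] [NonUnitalNonAssocSemiring α]

theorem diagonal_mul_single (d : n → α) (i j : n) (a : α) :
    diagonal d * single i j a = single i j (d i * a) := by
  ext k l
  rcases eq_or_ne i k with rfl | hk <;> simp [diagonal_mul, single_apply, *]

theorem single_mul_diagonal (d : n → α) (i j : n) (a : α) :
    single i j a * diagonal d = single i j (a * d j) := by
  ext k l
  rcases eq_or_ne j l with rfl | hl <;> simp [mul_diagonal, single_apply, *]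

end Matrix

theorem stmt10_general {V E A : Type*} [NonUnitalCStarAlgebra A]
    (r s : E → V) (p : V → A) (S : E → A)
    (hp_star : ∀ v, star (p v) = p v)
    (hp_idem : ∀ v, p v * p v = p v)
    (hCK1 : ∀ e, star (S e) * S e = p (r e))
    (hCK3 : ∀ e, p (s e) * S e = S e)
    (x : V → ℤ)
    {h : ℕ} [Fintype (SUp s x)] [Fintype (SDn s x)]
    (mup : SUp s x ≃ Fin h) (mdn : SDn s x ≃ Fin h)
    (hcomp : ∀ (q : SUp s x) (q' : SDn s x), mup q = mdn q' → rext r q.1.1 = rext r q'.1.1) :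
    Pmat r s x p mup * Vmat s x S mup mdn = Vmat s x S mup mdn ∧
      Vmat s x S mup mdn * Pmat r s x p mup = Vmat s x S mup mdn := by
  have hS_p : ∀ e, S e * p (r e) = S e := fun e => by
    have hproj : IsIdempotentElem (star (S e) * S e) := by rw [hCK1]; exact hp_idem (r e)
    simpa [hCK1] using mul_star_mul_self_of_isIdempotentElem hproj
  have hp_starS : ∀ e, p (r e) * star (S e) = star (S e) := fun e => by
    rw [← hp_star, ← star_mul, hS_p]
  have hstarS_p : ∀ e, star (S e) * p (s e) = star (S e) := fun e => by
    rw [← hp_star, ← star_mul, hCK3]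
  have hcol : ∀ q, p (rext r (mup.symm (mdn q)).1.1) = p (rext r q.1.1) := fun q => by
    rw [hcomp _ q (mup.apply_symm_apply _)]
  rw [Pmat, sum_single_equiv_eq_diagonal, Vmat]
  refine ⟨?_, ?_⟩
  · rw [mul_add, Finset.mul_sum, Finset.mul_sum]
    congr 1 <;> refine Finset.sum_congr rfl ?_ <;> rintro ⟨⟨e | v, i⟩, hq⟩ - <;>
      simp [diagonal_mul_single, rext, hCK3, hp_starS]
  · rw [add_mul, Finset.sum_mul, Finset.sum_mul]
    congr 1 <;> refine Finset.sum_congr rfl ?_ <;> rintro ⟨⟨e | v, i⟩, hq⟩ - <;>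
      simp only [single_mul_diagonal, Function.comp_apply, hcol, zero_mul] <;>
      simp [rext, hS_p, hstarS_p]

theorem stmt10 {V E A : Type*} [Countable V] [Countable E] [NonUnitalCStarAlgebra A]
    (r s : E → V) (p : V → A) (S : E → A)
    (hp_star : ∀ v, star (p v) = p v)
    (hp_idem : ∀ v, p v * p v = p v)
    (hp_orth : ∀ v w, v ≠ w → p v * p w = 0)
    (hCK1 : ∀ e, star (S e) * S e = p (r e))
    (hS_orth : ∀ e f, e ≠ f → star (S e) * S f = 0)
    (hCK3 : ∀ e, p (s e) * S e = S e)
    (x : V → ℤ) (hsupp : {v | x v ≠ 0}.Finite)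
    (hemit : ∀ v, x v ≠ 0 → {e | s e = v}.Finite)
    (hker : ∀ v, ∑ᶠ e ∈ {e | r e = v}, x (s e) = x v)
    {h : ℕ} [Fintype (SUp s x)] [Fintype (SDn s x)]
    (mup : SUp s x ≃ Fin h) (mdn : SDn s x ≃ Fin h)
    (hcomp : ∀ (q : SUp s x) (q' : SDn s x), mup q = mdn q' → rext r q.1.1 = rext r q'.1.1) :
    Pmat r s x p mup * Vmat s x S mup mdn = Vmat s x S mup mdn ∧
      Vmat s x S mup mdn * Pmat r s x p mup = Vmat s x S mup mdn :=
  stmt10_general r s p S hp_star hp_idem hCK1 hCK3 x mup mdn hcomp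
end

section
/- With notation as in the context, P − VV* = ∑_{w ∈ E⁰, 1≤i≤x_w} (p_w − ∑_{e ∈ s⁻¹(w)} s_e s_e*)·E_{m↑(w,i),m↑(w,i)} in M_h(A). -/
/-! The columns of `V` are indexed by `S↓(x)`: the column of an edge pair `(e,i)` carries `s_e`
in the row of `(s(e),i)`, and the column of a vertex pair `(w,i)` carries `s_e*` in the row of
`(e,i)` for every edge `e` leaving `w`. So `VV*` is the sum of the products of the columns with
their own adjoints. An edge column gives `s_e s_e*` at the diagonal entry `(s(e),i)`. A vertex
column gives `s_e* s_f` at the entry `((e,i),(f,i))`, which is `0` for `e ≠ f` and `p_{r(e)}`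
for `e = f`. Collecting the edge columns over each vertex pair `(w,i)` gives
`∑_{s(e)=w} s_e s_e*` there, and the `p_{r(e)}` cancel the edge part of `P`. -/

open Matrix

theorem sum_mul_star_sum_of_pairwise {ι R : Type*} [Fintype ι]
    [NonUnitalNonAssocSemiring R] [StarAddMonoid R] (F G : ι → R)
    (h : ∀ i j, i ≠ j → F i * star (G j) = 0) :
    (∑ i, F i) * star (∑ i, G i) = ∑ i, F i * star (G i) := by
  rw [star_sum, Finset.sum_mul_sum]
  exact Finset.sum_congr rfl fun i _ ↦
    Finset.sum_eq_single i (fun j _ hji ↦ h i j hji.symm) (by simp)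

namespace Matrix

theorem single_sub {m n α : Type*} [DecidableEq m] [DecidableEq n] [AddGroup α] (i : m) (j : n)
    (a b : α) : single i j (a - b) = single i j a - single i j b := by
  ext k l
  by_cases hkl : i = k ∧ j = l <;> simp [hkl]

variable {n α : Type*} [Fintype n] [DecidableEq n] [NonUnitalNonAssocSemiring α] [StarAddMonoid α]

theorem single_mul_star_single_same (i j k : n) (a b : α) :
    single i j a * star (single k j b) = single i k (a * star b) := by
  rw [star_eq_conjTranspose, conjTranspose_single, single_mul_single_same]

theorem single_mul_star_single_of_ne (i k : n) {j j' : n} (hj : j ≠ j') (a b : α) :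
    single i j a * star (single k j' b) = 0 := by
  rw [star_eq_conjTranspose, conjTranspose_single]
  exact single_mul_single_of_ne (h := hj) ..

end Matrix

section IndexSets

variable {V E : Type*} (s : E → V) (x : V → ℤ)

theorem finite_setOf_source_eq [Finite (SDn s x)] {w : V} (hw : 0 < x w) :
    {e | s e = w}.Finite := by
  refine Set.finite_coe_iff.mp (Finite.of_injective
    (fun e : {e // s e = w} ↦ (⟨(Sum.inl e.1, 1), le_rfl, by rw [e.2]; omega⟩ : SDn s x))
    fun e e' he ↦ Subtype.ext ?_)
  simpa using congrArg (fun d : SDn s x ↦ d.1.1) he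

def sourceUp {e : E} {i : ℤ} (hd : (Sum.inl e, i) ∈ SDn s x) : SUp s x :=
  ⟨(Sum.inr (s e), i), hd⟩

def sourceDn {e : E} {i : ℤ} (hq : (Sum.inl e, i) ∈ SUp s x) : SDn s x :=
  ⟨(Sum.inr (s e), i), hq⟩

def upOfDn : SDn s x → Option (SUp s x)
  | ⟨(Sum.inl _, _), hd⟩ => some (sourceUp s x hd)
  | ⟨(Sum.inr _, _), _⟩ => none

variable {M N : Type*} [AddCommMonoid M] [AddCommMonoid N]

def liftToSource (c : E → M) (φ : SUp s x → M →+ N) : SDn s x → N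
  | ⟨(Sum.inl e, _), hd⟩ => φ (sourceUp s x hd) (c e)
  | ⟨(Sum.inr _, _), _⟩ => 0

theorem sum_liftToSource_fiber_inr [Fintype (SDn s x)] [DecidableEq (SUp s x)]
    (c : E → M) (φ : SUp s x → M →+ N) {w : V} {i : ℤ} (hq : (Sum.inr w, i) ∈ SUp s x) :
    ∑ d with upOfDn s x d = some ⟨(Sum.inr w, i), hq⟩, liftToSource s x c φ d
      = φ ⟨(Sum.inr w, i), hq⟩ (∑ᶠ e ∈ {e | s e = w}, c e) := by
  have hfin := finite_setOf_source_eq s x (w := w) (by have := hq.1.trans hq.2; omega)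
  rw [finsum_mem_eq_finite_toFinset_sum _ hfin, map_sum]
  symm
  refine Finset.sum_bij (fun e he ↦ ⟨(Sum.inl e, i), hq.1,
      (hfin.mem_toFinset.mp he : s e = w) ▸ hq.2⟩) ?_ ?_ ?_ ?_
  · intro e he
    obtain rfl : s e = w := hfin.mem_toFinset.mp he
    exact Finset.mem_filter.mpr ⟨Finset.mem_univ _, rfl⟩
  · intro e _ e' _ h
    simpa using congrArg (fun d : SDn s x ↦ d.1.1) h
  · rintro ⟨⟨e | v, j⟩, hd⟩ hmem
    · have h := congrArg Subtype.val (Option.some_injective _ (Finset.mem_filter.mp hmem).2)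
      obtain ⟨rfl, rfl⟩ : s e = w ∧ j = i := by simpa [sourceUp] using h
      exact ⟨e, hfin.mem_toFinset.mpr rfl, rfl⟩
    · exact absurd (Finset.mem_filter.mp hmem).2 (Option.some_ne_none _).symm
  · intro e he
    obtain rfl : s e = w := hfin.mem_toFinset.mp he
    rfl

theorem sum_liftToSource [Fintype (SUp s x)] [Fintype (SDn s x)] (c : E → M)
    (φ : SUp s x → M →+ N) :
    ∑ d, liftToSource s x c φ d
      = ∑ q : SUp s x, (match q with
        | ⟨(Sum.inl _, _), _⟩ => 0
        | ⟨(Sum.inr w, _), _⟩ => φ q (∑ᶠ e ∈ {e | s e = w}, c e)) := by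
  classical
  rw [← Finset.sum_fiberwise Finset.univ (upOfDn s x), Fintype.sum_option,
    Finset.sum_eq_zero ?none, zero_add]
  case none =>
    rintro ⟨⟨e | v, i⟩, hd⟩ hmem
    · exact (Option.some_ne_none _ (Finset.mem_filter.mp hmem).2).elim
    · rfl
  refine Finset.sum_congr rfl fun q _ ↦ ?_
  rcases q with ⟨⟨e | w, i⟩, hq⟩
  · refine Finset.sum_eq_zero ?_
    rintro ⟨⟨e' | v, i'⟩, hd⟩ hmem
    · exact absurd (congrArg (fun q : SUp s x ↦ q.1.1)
        (Option.some_injective _ (Finset.mem_filter.mp hmem).2)) Sum.inr_ne_inl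
    · rfl
  · exact sum_liftToSource_fiber_inr s x c φ hq

end IndexSets

namespace Vmat

variable {V E A : Type*} [NonUnitalSemiring A] [StarRing A] (s : E → V) (x : V → ℤ) (S : E → A)
  {h : ℕ} (mup : SUp s x ≃ Fin h) (mdn : SDn s x ≃ Fin h)

def dnTerm : SDn s x → Matrix (Fin h) (Fin h) A
  | ⟨(Sum.inl e, i), hd⟩ => single (mup (sourceUp s x hd)) (mdn ⟨(Sum.inl e, i), hd⟩) (S e)
  | ⟨(Sum.inr _, _), _⟩ => 0

def upTerm : SUp s x → Matrix (Fin h) (Fin h) A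
  | ⟨(Sum.inl e, i), hq⟩ =>
      single (mup ⟨(Sum.inl e, i), hq⟩) (mdn (sourceDn s x hq)) (star (S e))
  | ⟨(Sum.inr _, _), _⟩ => 0

theorem eq_sum_dnTerm_add_sum_upTerm [Fintype (SUp s x)] [Fintype (SDn s x)] :
    Vmat s x S mup mdn = ∑ d, dnTerm s x S mup mdn d + ∑ q, upTerm s x S mup mdn q :=
  rfl

variable {s x S mup mdn}

theorem dnTerm_mul_star_dnTerm_of_ne {d d' : SDn s x} (hne : d ≠ d') :
    dnTerm s x S mup mdn d * star (dnTerm s x S mup mdn d') = 0 := by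
  rcases d with ⟨⟨e | _, i⟩, hd⟩ <;> rcases d' with ⟨⟨e' | _, i'⟩, hd'⟩
  · exact single_mul_star_single_of_ne _ _ (mdn.injective.ne hne) _ _
  all_goals simp [dnTerm]

theorem dnTerm_mul_star_upTerm (d : SDn s x) (q : SUp s x) :
    dnTerm s x S mup mdn d * star (upTerm s x S mup mdn q) = 0 := by
  rcases d with ⟨⟨e | _, i⟩, hd⟩ <;> rcases q with ⟨⟨e' | _, i'⟩, hq⟩
  · refine single_mul_star_single_of_ne _ _ (fun hc ↦ ?_) _ _
    exact Sum.inl_ne_inr (congrArg (fun d : SDn s x ↦ d.1.1) (mdn.injective hc))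
  all_goals simp [dnTerm, upTerm]

theorem upTerm_mul_star_upTerm_of_ne (hS_orth : ∀ e f, e ≠ f → star (S e) * S f = 0)
    {q q' : SUp s x} (hne : q ≠ q') :
    upTerm s x S mup mdn q * star (upTerm s x S mup mdn q') = 0 := by
  rcases q with ⟨⟨e | _, i⟩, hq⟩ <;> rcases q' with ⟨⟨f | _, j⟩, hq'⟩
  · by_cases hc : mdn (sourceDn s x hq) = mdn (sourceDn s x hq')
    · obtain ⟨-, rfl⟩ : s e = s f ∧ i = j := by
        simpa [sourceDn] using congrArg Subtype.val (mdn.injective hc)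
      have hef : e ≠ f := by rintro rfl; exact hne rfl
      simp only [upTerm]
      rw [hc, single_mul_star_single_same, star_star, hS_orth e f hef, single_zero]
    · exact single_mul_star_single_of_ne _ _ hc _ _
  all_goals simp [upTerm]

theorem upTerm_mul_star_upTerm_self (q : SUp s x) :
    upTerm s x S mup mdn q * star (upTerm s x S mup mdn q)
      = single (mup q) (mup q) (Sum.elim (fun e ↦ star (S e) * S e) 0 q.1.1) := by
  rcases q with ⟨⟨e | _, i⟩, hq⟩
  · simp only [upTerm]
    rw [single_mul_star_single_same, star_star]
    rfl
  · simp [upTerm]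

theorem dnTerm_mul_star_dnTerm_self (d : SDn s x) :
    dnTerm s x S mup mdn d * star (dnTerm s x S mup mdn d)
      = liftToSource s x (fun e ↦ S e * star (S e))
          (fun q ↦ singleAddMonoidHom (mup q) (mup q)) d := by
  rcases d with ⟨⟨e | _, i⟩, hd⟩
  · exact single_mul_star_single_same _ _ _ _ _
  · simp [dnTerm, liftToSource]

theorem sum_dnTerm_mul_star_dnTerm [Fintype (SUp s x)] [Fintype (SDn s x)] :
    ∑ d, dnTerm s x S mup mdn d * star (dnTerm s x S mup mdn d)
      = ∑ q, single (mup q) (mup q)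
          (Sum.elim 0 (fun w ↦ ∑ᶠ e ∈ {e | s e = w}, S e * star (S e)) q.1.1) := by
  simp_rw [dnTerm_mul_star_dnTerm_self, sum_liftToSource]
  refine Finset.sum_congr rfl fun q _ ↦ ?_
  rcases q with ⟨⟨e | _, i⟩, hq⟩ <;> simp

theorem mul_star_self [Fintype (SUp s x)] [Fintype (SDn s x)]
    (hS_orth : ∀ e f, e ≠ f → star (S e) * S f = 0) :
    Vmat s x S mup mdn * star (Vmat s x S mup mdn)
      = ∑ q, single (mup q) (mup q) (Sum.elim (fun e ↦ star (S e) * S e)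
          (fun w ↦ ∑ᶠ e ∈ {e | s e = w}, S e * star (S e)) q.1.1) := by
  have hcross : (∑ d, dnTerm s x S mup mdn d) * star (∑ q, upTerm s x S mup mdn q) = 0 := by
    rw [star_sum, Finset.sum_mul_sum]
    exact Finset.sum_eq_zero fun d _ ↦ Finset.sum_eq_zero fun q _ ↦ dnTerm_mul_star_upTerm d q
  have hcross' : (∑ q, upTerm s x S mup mdn q) * star (∑ d, dnTerm s x S mup mdn d) = 0 := by
    simpa using congrArg star hcross
  rw [eq_sum_dnTerm_add_sum_upTerm, star_add, add_mul, mul_add, mul_add, hcross, hcross',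
    add_zero, zero_add,
    sum_mul_star_sum_of_pairwise _ _ fun _ _ ↦ dnTerm_mul_star_dnTerm_of_ne,
    sum_mul_star_sum_of_pairwise _ _ fun _ _ ↦ upTerm_mul_star_upTerm_of_ne hS_orth,
    sum_dnTerm_mul_star_dnTerm, ← Finset.sum_add_distrib]
  refine Finset.sum_congr rfl fun q _ ↦ ?_
  rw [upTerm_mul_star_upTerm_self, ← single_add]
  rcases q with ⟨⟨e | w, i⟩, hq⟩ <;> simp

end Vmat

theorem stmt15_general {V E A : Type*} [NonUnitalCStarAlgebra A]
    (r s : E → V) (p : V → A) (S : E → A)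
    (hCK1 : ∀ e, star (S e) * S e = p (r e))
    (hS_orth : ∀ e f, e ≠ f → star (S e) * S f = 0)
    (x : V → ℤ)
    {h : ℕ} [Fintype (SUp s x)] [Fintype (SDn s x)]
    (mup : SUp s x ≃ Fin h) (mdn : SDn s x ≃ Fin h) :
    Pmat r s x p mup - Vmat s x S mup mdn * star (Vmat s x S mup mdn) =
      ∑ q : SUp s x, Matrix.single (mup q) (mup q)
        (match q.1.1 with
         | Sum.inl _ => (0 : A)
         | Sum.inr w => p w - ∑ᶠ e ∈ {e | s e = w}, S e * star (S e)) := by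
  rw [Vmat.mul_star_self hS_orth, Pmat, ← Finset.sum_sub_distrib]
  refine Finset.sum_congr rfl fun q _ ↦ ?_
  rw [← single_sub]
  rcases q with ⟨⟨e | w, i⟩, hq⟩ <;> simp [rext, hCK1]

theorem stmt15 {V E A : Type*} [Countable V] [Countable E] [NonUnitalCStarAlgebra A]
    (r s : E → V) (p : V → A) (S : E → A)
    (hp_star : ∀ v, star (p v) = p v)
    (hp_idem : ∀ v, p v * p v = p v)
    (hp_orth : ∀ v w, v ≠ w → p v * p w = 0)
    (hCK1 : ∀ e, star (S e) * S e = p (r e))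
    (hS_orth : ∀ e f, e ≠ f → star (S e) * S f = 0)
    (hCK3 : ∀ e, p (s e) * S e = S e)
    (x : V → ℤ) (hsupp : {v | x v ≠ 0}.Finite)
    (hemit : ∀ v, x v ≠ 0 → {e | s e = v}.Finite)
    (hker : ∀ v, ∑ᶠ e ∈ {e | r e = v}, x (s e) = x v)
    {h : ℕ} [Fintype (SUp s x)] [Fintype (SDn s x)]
    (mup : SUp s x ≃ Fin h) (mdn : SDn s x ≃ Fin h)
    (hcomp : ∀ (q : SUp s x) (q' : SDn s x), mup q = mdn q' → rext r q.1.1 = rext r q'.1.1) :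
    Pmat r s x p mup - Vmat s x S mup mdn * star (Vmat s x S mup mdn) =
      ∑ q : SUp s x, Matrix.single (mup q) (mup q)
        (match q.1.1 with
         | Sum.inl _ => (0 : A)
         | Sum.inr w => p w - ∑ᶠ e ∈ {e | s e = w}, S e * star (S e)) :=
  stmt15_general r s p S hCK1 hS_orth x mup mdn
end
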